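/- arXiv:1809.00573 — 2 statements merged into one kernel-verified Lean document; each statement's English description precedes it below -/
import Mathlib

section
/- Let N ≥ 1, α, β ∈ ℝ, and a_1,…,a_N ∈ ℝ with (1/N) ∑_{j=1}^N exp(2 i a_j) = 0. Then for every i ∈ {1,…,N}, (1/N) ∑_{j=1}^N sin(a_i - a_j + β) · sin(a_i - a_j + α) = cos(α - β)/2. In particular the value is independent of i. -/
open Finset

theorem splay_frequency (N : ℕ) (hN : 1 ≤ N) (α β : ℝ) (a : Fin N → ℝ)
    (hR2 : (1 / (N : ℂ)) * ∑ j, Complex.exp (2 * Complex.I * (a j : ℂ)) = 0) :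
    ∀ i : Fin N,
      (1 / (N : ℝ)) * ∑ j, Real.sin (a i - a j + β) * Real.sin (a i - a j + α) =
        Real.cos (α - β) / 2 := by
  have hNR : (N : ℝ) ≠ 0 := by positivity
  have hNC : (N : ℂ) ≠ 0 := by exact_mod_cast Nat.cast_ne_zero.mpr (by omega)
  have h0 : ∑ j, Complex.exp (2 * Complex.I * (a j : ℂ)) = 0 := by
    field_simp at hR2
    simpa using hR2
  have key : ∀ j : Fin N, (2 : ℂ) * Complex.I * (a j : ℂ) = ((2 * a j : ℝ) : ℂ) * Complex.I := by
    intro j; push_cast; ring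
  simp only [key] at h0
  have hc : ∑ j, Real.cos (2 * a j) = 0 := by
    have := congrArg Complex.re h0
    simpa only [Complex.re_sum, Complex.exp_ofReal_mul_I_re, Complex.zero_re] using this
  have hs : ∑ j, Real.sin (2 * a j) = 0 := by
    have := congrArg Complex.im h0
    simpa only [Complex.im_sum, Complex.exp_ofReal_mul_I_im, Complex.zero_im] using this
  intro i
  have hterm : ∀ j : Fin N,
      Real.sin (a i - a j + β) * Real.sin (a i - a j + α) =
        Real.cos (β - α) / 2 -
          (Real.cos (2 * a i + α + β) * Real.cos (2 * a j)
            + Real.sin (2 * a i + α + β) * Real.sin (2 * a j)) / 2 := by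
    intro j
    have h1 : Real.cos ((a i - a j + β) - (a i - a j + α)) = Real.cos (β - α) := by ring_nf
    have h2 : a i - a j + β + (a i - a j + α) = (2 * a i + α + β) - 2 * a j := by ring
    have h3 := Real.cos_sub (a i - a j + β) (a i - a j + α)
    have h4 := Real.cos_add (a i - a j + β) (a i - a j + α)
    rw [h1] at h3
    rw [h2, Real.cos_sub] at h4
    nlinarith [h3, h4]
  have hz : ∑ j, (Real.cos (2 * a i + α + β) * Real.cos (2 * a j)
      + Real.sin (2 * a i + α + β) * Real.sin (2 * a j)) = 0 := by
    rw [Finset.sum_add_distrib, ← Finset.mul_sum, ← Finset.mul_sum, hc, hs]; ring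
  rw [Finset.sum_congr rfl fun j _ => hterm j]
  rw [Finset.sum_sub_distrib, Finset.sum_const, ← Finset.sum_div, hz]
  simp only [card_univ, Fintype.card_fin, nsmul_eq_mul, zero_div, sub_zero]
  rw [show α - β = -(β - α) by ring, Real.cos_neg]
  field_simp
end

section
/- Let N ≥ 1, k ∈ ℤ with N not dividing 2k, α, β, Ω ∈ ℝ with Ω = cos(α−β)/2. Define φ_i(t) = Ω t + (i−1)·2πk/N and κ_{ij} = −sin((i−j)·2πk/N + β) for i,j ∈ {1,…,N}. Then for every i, j and every t, φ_i'(t) = −(1/N) ∑_{j=1}^N κ_{ij} sin(φ_i(t) − φ_j(t) + α) and κ_{ij}' = 0 = −ε(sin(φ_i − φ_j + β) + κ_{ij}), i.e., (φ, κ) is a solution of the adaptively coupled phase oscillator system with ω = 0. -/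
open Finset

lemma sum_cos_eq_zero (N : ℕ) (a d : ℝ)
    (h1 : Complex.exp (d * Complex.I) ≠ 1)
    (h2 : Complex.exp ((N : ℝ) * d * Complex.I) = 1) :
    ∑ j : Fin N, Real.cos (a + (j : ℝ) * d) = 0 := by
  have key : ∑ j : Fin N, Complex.exp ((↑(a + (j : ℝ) * d)) * Complex.I) = 0 := by
    have hterm : ∀ j : Fin N,
        Complex.exp ((↑(a + (j : ℝ) * d)) * Complex.I)
          = Complex.exp ((a : ℂ) * Complex.I) * (Complex.exp ((d : ℂ) * Complex.I)) ^ (j : ℕ) := by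
      intro j
      rw [← Complex.exp_nat_mul, ← Complex.exp_add]
      push_cast
      ring_nf
    calc ∑ j : Fin N, Complex.exp ((↑(a + (j : ℝ) * d)) * Complex.I)
        = ∑ j : Fin N, Complex.exp ((a : ℂ) * Complex.I) * (Complex.exp ((d : ℂ) * Complex.I)) ^ (j : ℕ) := by
          exact Finset.sum_congr rfl fun j _ => hterm j
      _ = Complex.exp ((a : ℂ) * Complex.I) * ∑ j ∈ Finset.range N, (Complex.exp ((d : ℂ) * Complex.I)) ^ j := by
          rw [← Finset.mul_sum, Fin.sum_univ_eq_sum_range]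
      _ = 0 := by
          rw [geom_sum_eq h1]
          have : (Complex.exp ((d : ℂ) * Complex.I)) ^ N = 1 := by
            rw [← Complex.exp_nat_mul]
            convert h2 using 2
            push_cast
            ring
          rw [this]
          simp
  calc ∑ j : Fin N, Real.cos (a + (j : ℝ) * d)
      = ∑ j : Fin N, (Complex.exp ((↑(a + (j : ℝ) * d)) * Complex.I)).re := by
        refine Finset.sum_congr rfl fun j _ => ?_
        rw [Complex.exp_ofReal_mul_I_re]
    _ = (∑ j : Fin N, Complex.exp ((↑(a + (j : ℝ) * d)) * Complex.I)).re := by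
        rw [Complex.re_sum]
    _ = 0 := by rw [key]; rfl

theorem rotating_wave_is_solution (N : ℕ) (hN : 1 ≤ N) (k : ℤ)
    (hk : ¬ (N : ℤ) ∣ 2 * k) (α β ε Ω : ℝ) (hΩ : Ω = Real.cos (α - β) / 2)
    (φ : Fin N → ℝ → ℝ) (κ : Fin N → Fin N → ℝ)
    (hφ : ∀ i t, φ i t = Ω * t + (i : ℝ) * (2 * Real.pi * k) / N)
    (hκ : ∀ i j, κ i j = -Real.sin (((i : ℝ) - (j : ℝ)) * (2 * Real.pi * k) / N + β)) :
    (∀ (i : Fin N) (t : ℝ),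
      HasDerivAt (φ i)
        (-(1 / (N : ℝ)) * ∑ j, κ i j * Real.sin (φ i t - φ j t + α)) t) ∧
    (∀ (i j : Fin N) (t : ℝ),
      -ε * (Real.sin (φ i t - φ j t + β) + κ i j) = 0) := by
  have hNne : (N : ℝ) ≠ 0 := by positivity
  have hpi := Real.pi_ne_zero
  have hdiff : ∀ (i j : Fin N) (t : ℝ),
      φ i t - φ j t = ((i : ℝ) - (j : ℝ)) * (2 * Real.pi * k) / N := by
    intro i j t
    rw [hφ, hφ]
    field_simp
    ring
  constructor
  · intro i t
    -- the sum equals Ω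
    have hsum : -(1 / (N : ℝ)) * ∑ j, κ i j * Real.sin (φ i t - φ j t + α) = Ω := by
      have hterm : ∀ j : Fin N,
          κ i j * Real.sin (φ i t - φ j t + α)
            = Real.cos ((2 * (i : ℝ) * (2 * Real.pi * k) / N + (α + β)) + (j : ℝ) * (-(2 * (2 * Real.pi * k) / N))) / 2
              - Real.cos (β - α) / 2 := by
        intro j
        rw [hκ, hdiff]
        set x : ℝ := ((i : ℝ) - (j : ℝ)) * (2 * Real.pi * k) / N with hx
        have e1 : (2 * (i : ℝ) * (2 * Real.pi * k) / N + (α + β)) + (j : ℝ) * (-(2 * (2 * Real.pi * k) / N))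
            = (x + α) + (x + β) := by rw [hx]; field_simp; ring
        have e2 : β - α = (x + β) - (x + α) := by ring
        rw [e1, e2, Real.cos_add, Real.cos_sub]
        ring
      rw [Finset.sum_congr rfl fun j _ => hterm j, Finset.sum_sub_distrib]
      have hcos0 : ∑ j : Fin N, Real.cos ((2 * (i : ℝ) * (2 * Real.pi * k) / N + (α + β)) + (j : ℝ) * (-(2 * (2 * Real.pi * k) / N))) = 0 := by
        apply sum_cos_eq_zero
        · intro h
          rw [Complex.exp_eq_one_iff] at h
          obtain ⟨n, hn⟩ := h
          apply hk
          refine ⟨-n, ?_⟩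
          have hC : (↑(-(2 * (2 * Real.pi * k) / N)) : ℂ) * Complex.I
              = (↑((n : ℝ) * (2 * Real.pi)) : ℂ) * Complex.I := by
            rw [hn]; push_cast; ring
          have hre : (-(2 * (2 * Real.pi * k) / N) : ℝ) = (n : ℝ) * (2 * Real.pi) := by
            exact_mod_cast mul_right_cancel₀ Complex.I_ne_zero hC
          have hre2 : -(2 * (2 * Real.pi * (k : ℝ))) = (n : ℝ) * (2 * Real.pi) * N := by
            field_simp at hre
            linear_combination (2 * Real.pi) * hre
          have h2pi : (2 * Real.pi : ℝ) ≠ 0 := by positivity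
          have hfin : (2 * Real.pi) * (2 * (k : ℝ)) = (2 * Real.pi) * ((N : ℝ) * (-(n : ℝ))) := by
            linear_combination -hre2
          have := mul_left_cancel₀ h2pi hfin
          exact_mod_cast this
        · rw [Complex.exp_eq_one_iff]
          refine ⟨-2 * k, ?_⟩
          have hNC : (N : ℂ) ≠ 0 := by exact_mod_cast hNne
          push_cast
          field_simp
      have hswap : Real.cos (β - α) = Real.cos (α - β) := by
        rw [← Real.cos_neg, neg_sub]
      rw [← Finset.sum_div, hcos0, Finset.sum_const, Finset.card_univ, Fintype.card_fin,
        nsmul_eq_mul, hΩ, hswap]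
      field_simp
      ring
    rw [hsum]
    have : φ i = fun t => Ω * t + (i : ℝ) * (2 * Real.pi * k) / N := funext fun t => hφ i t
    rw [this]
    simpa using ((hasDerivAt_id t).const_mul Ω).add_const ((i : ℝ) * (2 * Real.pi * k) / N)
  · intro i j t
    rw [hdiff, hκ]
    ring
end
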